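/- Let p, r be positive integers and l a non-negative integer. Then Σ_{n=1}^∞ h_n^{(-r)}/(n^p C(n+l,l)) = ζ(p+1) - H_r^{(p+1)} + Σ_{n=1}^r 1/(n^{p+1} C(n+l,l)) + Σ_{k=1}^{r-1} Σ_{n=1}^{r-k} C(r,k) (-1)^k / (n (n+k)^p C(n+k+l, l)) + ((-1)^r / C(r+l,l)) Σ_{a=0, a≠r}^{r+l} C(r+l, a) (-1)^a { (H_r - H_a)/(r-a)^p + Σ_{j=2}^p (H_r^{(j)} - ζ(j)) / (r-a)^{p-j+1} }. -/

import Mathlib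

open Finset

/-- Generalized harmonic number `H_n^(r) = ∑_{k=1}^n 1/k^r`. -/
noncomputable def Hgen (r n : ℕ) : ℝ := ∑ k ∈ Finset.Icc 1 n, (1 : ℝ) / (k : ℝ) ^ r

/-- Hyperharmonic numbers of non-negative order: `hpos 0 n = 1/n`,
`hpos (r+1) n = ∑_{k=1}^n hpos r k`.  In particular `hpos 1 n = H_n`. -/
noncomputable def hpos : ℕ → ℕ → ℝ
  | 0, n => 1 / (n : ℝ)
  | r + 1, n => ∑ k ∈ Finset.Icc 1 n, hpos r k

/-- Hyperharmonic numbers of negative order: `hneg r n = h_n^(-r)` for `r ≥ 1`. -/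
noncomputable def hneg (r n : ℕ) : ℝ :=
  if r < n then (-1 : ℝ) ^ r / (((n - r : ℕ) : ℝ) * (Nat.choose n r : ℝ))
  else ∑ k ∈ Finset.range n, (Nat.choose r k : ℝ) * (-1 : ℝ) ^ k / ((n - k : ℕ) : ℝ)

/-- Hyperharmonic numbers of arbitrary integer order. -/
noncomputable def hh (r : ℤ) (n : ℕ) : ℝ :=
  if 0 ≤ r then hpos r.toNat n else hneg (-r).toNat n

/-- Riemann zeta value `ζ(k) = ∑_{n=1}^∞ 1/n^k`. -/
noncomputable def zetaVal (k : ℕ) : ℝ := ∑' n : ℕ, 1 / ((n : ℝ) + 1) ^ k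

/-- Linear Euler sum `ζ_{H^(s)}(t) = ∑_{n=1}^∞ H_n^(s)/n^t`. -/
noncomputable def eulerSum (s t : ℕ) : ℝ := ∑' n : ℕ, Hgen s (n + 1) / ((n : ℝ) + 1) ^ t

/-- The set of Riemann zeta values `ζ(k)`, `k ≥ 2`. -/
def zetaSet : Set ℝ := {x | ∃ k : ℕ, 2 ≤ k ∧ x = zetaVal k}

/-- The set of Riemann zeta values together with linear Euler sums. -/
def zetaEulerSet : Set ℝ :=
  zetaSet ∪ {x | ∃ s t : ℕ, 1 ≤ s ∧ 2 ≤ t ∧ x = eulerSum s t}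

open Filter Topology

/-!
Split the series at `n = r`. For `n ≤ r`, `h_n^(-r)` is a finite sum, and exchanging the order
of summation gives the two finite double sums. For `n = m + r` with `m ≥ 1`,
`h_n^(-r) = (-1)^r / (m C(m+r,r))`, and `C(m+r,r) C(m+r+l,l) = C(m+r+l,r+l) C(r+l,l)`, so with
`s = r + l` the summand is `(-1)^r / C(r+l,l)` times `1 / (m C(m+s,s) (m+r)^p)`. The partial
fraction expansion `1 / (m C(m+s,s)) = ∑_a (-1)^a C(s,a) / (m+a)` reduces the tail to the series
`∑_m 1 / ((m+a) (m+r)^p)`: for `a = r` this is a tail of `ζ(p+1)`, and for `a ≠ r` a partial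
fraction decomposition in `m + r` turns it into a telescoping harmonic series plus tails of
`ζ(j)`, `2 ≤ j ≤ p`.
-/

theorem sum_Icc_one_eq_sum_range {M : Type*} [AddCommMonoid M] (f : ℕ → M) (n : ℕ) :
    ∑ k ∈ Icc 1 n, f k = ∑ i ∈ range n, f (i + 1) := by
  rw [range_eq_Ico, sum_Ico_add' f 0 n 1, zero_add, Finset.Ico_add_one_right_eq_Icc]

theorem Hgen_eq_sum_range (k n : ℕ) : Hgen k n = ∑ i ∈ range n, 1 / ((i : ℝ) + 1) ^ k := by
  simp only [Hgen, sum_Icc_one_eq_sum_range, Nat.cast_add, Nat.cast_one]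

theorem hasSum_zeta_tail {k : ℕ} (hk : 2 ≤ k) (c : ℕ) :
    HasSum (fun m : ℕ => 1 / ((m : ℝ) + 1 + c) ^ k) (zetaVal k - Hgen k c) := by
  have hzeta : HasSum (fun m : ℕ => 1 / ((m : ℝ) + 1) ^ k) (zetaVal k) := by
    have := (summable_nat_add_iff 1).2 (Real.summable_one_div_nat_pow.2 hk)
    push_cast at this
    exact this.hasSum
  rw [Hgen_eq_sum_range]
  refine ((hasSum_nat_add_iff' c).2 hzeta).congr_fun fun m => ?_
  push_cast
  ring

theorem hasSum_sub_add_of_antitone {f : ℕ → ℝ} (hf : Antitone f)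
    (hf0 : Tendsto f atTop (𝓝 0)) (c : ℕ) :
    HasSum (fun m => f m - f (m + c)) (∑ i ∈ range c, f i) := by
  refine (hasSum_iff_tendsto_nat_of_nonneg
    (fun m => sub_nonneg.2 (hf (m.le_add_right c))) _).2 ?_
  have hpartial : ∀ n, ∑ m ∈ range n, (f m - f (m + c)) =
      ∑ i ∈ range c, f i - ∑ i ∈ range c, f (n + i) := by
    intro n
    have h₁ := sum_range_add f n c
    have h₂ := sum_range_add f c n
    rw [add_comm c n] at h₂
    simp only [sum_sub_distrib, add_comm _ c]
    linarith
  have hrest : Tendsto (fun n => ∑ i ∈ range c, f (n + i)) atTop (𝓝 0) := by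
    simpa using tendsto_finsetSum (range c) fun i _ => hf0.comp (tendsto_add_atTop_nat i)
  simpa [hpartial] using tendsto_const_nhds.sub hrest

theorem hasSum_one_div_sub_one_div (c : ℕ) :
    HasSum (fun m : ℕ => 1 / ((m : ℝ) + 1) - 1 / ((m : ℝ) + 1 + c)) (Hgen 1 c) := by
  have hf : Antitone fun m : ℕ => 1 / ((m : ℝ) + 1) := fun a b hab => by
    dsimp only
    gcongr
  simp only [Hgen_eq_sum_range, pow_one]
  refine (hasSum_sub_add_of_antitone hf tendsto_one_div_add_atTop_nhds_zero_nat c).congr_fun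
    fun m => ?_
  push_cast
  ring

theorem hasSum_one_div_add_sub_one_div_add (a b : ℕ) :
    HasSum (fun m : ℕ => 1 / ((m : ℝ) + 1 + a) - 1 / ((m : ℝ) + 1 + b))
      (Hgen 1 b - Hgen 1 a) := by
  refine ((hasSum_one_div_sub_one_div b).sub (hasSum_one_div_sub_one_div a)).congr_fun
    fun m => ?_
  ring

theorem one_div_mul_add_pow {K : Type*} [Field K] {x d : K} (hx : x ≠ 0) (hd : d ≠ 0)
    (hxd : x + d ≠ 0) {p : ℕ} (hp : 1 ≤ p) :
    1 / (x * (x + d) ^ p) =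
      (1 / x - 1 / (x + d)) / d ^ p - ∑ j ∈ Icc 2 p, 1 / (d ^ (p - j + 1) * (x + d) ^ j) := by
  induction p, hp using Nat.le_induction with
  | base => field_simp; simp
  | succ p hp ih =>
    have hshift : ∑ j ∈ Icc 2 p, 1 / (d ^ (p + 1 - j + 1) * (x + d) ^ j) =
        (∑ j ∈ Icc 2 p, 1 / (d ^ (p - j + 1) * (x + d) ^ j)) / d := by
      rw [sum_div]
      refine sum_congr rfl fun j hj => ?_
      rw [show p + 1 - j + 1 = p - j + 1 + 1 by grind, pow_succ]
      field_simp
    have hprev : ∑ j ∈ Icc 2 p, 1 / (d ^ (p - j + 1) * (x + d) ^ j) =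
        (1 / x - 1 / (x + d)) / d ^ p - 1 / (x * (x + d) ^ p) := by
      rw [ih]; ring
    rw [sum_Icc_succ_top (by omega), hshift, hprev, Nat.sub_self]
    field_simp
    ring

theorem hasSum_one_div_mul_add_pow {a r p : ℕ} (hp : 1 ≤ p) (ha : a ≠ r) :
    HasSum (fun m : ℕ => 1 / (((m : ℝ) + 1 + a) * ((m : ℝ) + 1 + r) ^ p))
      ((Hgen 1 r - Hgen 1 a) / ((r : ℝ) - a) ^ p +
        ∑ j ∈ Icc 2 p, (Hgen j r - zetaVal j) / ((r : ℝ) - a) ^ (p - j + 1)) := by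
  set d : ℝ := r - a
  have hd : d ≠ 0 := sub_ne_zero.2 (Nat.cast_injective.ne ha.symm)
  have hsplit : ∀ m : ℕ, 1 / (((m : ℝ) + 1 + a) * ((m : ℝ) + 1 + r) ^ p) =
      (1 / ((m : ℝ) + 1 + a) - 1 / ((m : ℝ) + 1 + r)) / d ^ p -
        ∑ j ∈ Icc 2 p, 1 / ((m : ℝ) + 1 + r) ^ j / d ^ (p - j + 1) := by
    intro m
    have hxd : (m : ℝ) + 1 + a + d = (m : ℝ) + 1 + r := by ring
    have := one_div_mul_add_pow (x := (m : ℝ) + 1 + a) (by positivity) hd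
      (by rw [hxd]; positivity) hp
    rw [hxd] at this
    rw [this]
    congr 1
    refine sum_congr rfl fun j _ => ?_
    rw [div_div, mul_comm]
  have htail : ∀ j ∈ Icc 2 p,
      HasSum (fun m : ℕ => 1 / ((m : ℝ) + 1 + r) ^ j / d ^ (p - j + 1))
      ((zetaVal j - Hgen j r) / d ^ (p - j + 1)) :=
    fun j hj => (hasSum_zeta_tail (mem_Icc.1 hj).1 r).div_const _
  have hneg : ∑ j ∈ Icc 2 p, (Hgen j r - zetaVal j) / d ^ (p - j + 1) =
      -∑ j ∈ Icc 2 p, (zetaVal j - Hgen j r) / d ^ (p - j + 1) := by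
    rw [← sum_neg_distrib]
    exact sum_congr rfl fun j _ => by ring
  rw [hneg, ← sub_eq_add_neg]
  exact (((hasSum_one_div_add_sub_one_div_add a r).div_const (d ^ p)).sub
    (hasSum_sum htail)).congr_fun hsplit

theorem factorial_div_prod_sub_factorial_div_prod {K : Type*} [Field K] (s : ℕ) {x : K}
    (hx : ∀ j : ℕ, x + j ≠ 0) :
    (s.factorial : K) / ∏ j ∈ range (s + 1), (x + j) -
        (s.factorial : K) / ∏ j ∈ range (s + 1), (x + 1 + j) =
      ((s + 1).factorial : K) / ∏ j ∈ range (s + 2), (x + j) := by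
  have hP : ∏ j ∈ range (s + 1), (x + j) ≠ 0 := prod_ne_zero_iff.2 fun j _ => hx j
  have hQ : ∏ j ∈ range (s + 1), (x + 1 + j) ≠ 0 :=
    prod_ne_zero_iff.2 fun j _ => by simpa [add_assoc, add_comm (1 : K)] using hx (j + 1)
  have hright :
      ∏ j ∈ range (s + 2), (x + j) = (∏ j ∈ range (s + 1), (x + j)) * (x + (s + 1)) := by
    rw [prod_range_succ]
    push_cast
    ring
  have hleft : ∏ j ∈ range (s + 2), (x + j) = x * ∏ j ∈ range (s + 1), (x + 1 + j) := by
    rw [prod_range_succ', mul_comm]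
    push_cast
    simp only [add_zero, add_assoc, add_comm (1 : K)]
  have hR : ∏ j ∈ range (s + 2), (x + j) ≠ 0 :=
    hright ▸ mul_ne_zero hP (by exact_mod_cast hx (s + 1))
  rw [div_sub_div _ _ hP hQ, div_eq_div_iff (mul_ne_zero hP hQ) hR, Nat.factorial_succ]
  push_cast
  linear_combination (s.factorial : K) * (∏ j ∈ range (s + 1), (x + 1 + j)) * hright -
    (s.factorial : K) * (∏ j ∈ range (s + 1), (x + j)) * hleft

theorem sum_choose_mul_neg_one_pow_div_add {K : Type*} [Field K] (s : ℕ) {x : K}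
    (hx : ∀ j : ℕ, x + j ≠ 0) :
    ∑ a ∈ range (s + 1), (s.choose a : K) * (-1) ^ a / (x + a) =
      (s.factorial : K) / ∏ j ∈ range (s + 1), (x + j) := by
  induction s generalizing x with
  | zero => simp
  | succ s ih =>
    have hx1 : ∀ j : ℕ, x + 1 + j ≠ 0 := fun j => by
      simpa [add_assoc, add_comm (1 : K)] using hx (j + 1)
    have hpascal := sum_choose_succ_mul (fun a _ => (-1 : K) ^ a / (x + a)) s
    have hshift :
        ∑ a ∈ range (s + 1), (s.choose a : K) * ((-1) ^ (a + 1) / (x + (a + 1 : ℕ))) =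
        -∑ a ∈ range (s + 1), (s.choose a : K) * ((-1) ^ a / (x + 1 + a)) := by
      rw [← sum_neg_distrib]
      refine sum_congr rfl fun a _ => ?_
      push_cast
      ring
    simp only [mul_div_assoc] at ih ⊢
    rw [hpascal, hshift, ih hx, ih hx1, ← sub_eq_add_neg,
      factorial_div_prod_sub_factorial_div_prod s hx]

theorem prod_range_add_eq_mul_choose_mul_factorial (n s : ℕ) :
    ∏ j ∈ range (s + 1), (n + j) = n * (n + s).choose s * s.factorial := by
  induction s with
  | zero => simp
  | succ s ih =>
    have hpascal := Nat.add_one_mul_choose_eq (n + s) s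
    calc ∏ j ∈ range (s + 1 + 1), (n + j)
        = n * s.factorial * ((n + s + 1) * (n + s).choose s) := by
          rw [prod_range_succ, ih]; ring
      _ = n * (n + (s + 1)).choose (s + 1) * (s + 1).factorial := by
          rw [hpascal, Nat.factorial_succ, ← add_assoc]; ring

theorem sum_choose_mul_neg_one_pow_div_natCast_add {K : Type*} [Field K] [CharZero K]
    (s : ℕ) {n : ℕ} (hn : n ≠ 0) :
    ∑ a ∈ range (s + 1), (s.choose a : K) * (-1) ^ a / (n + a) =
      1 / (n * (n + s).choose s) := by
  have hx : ∀ j : ℕ, (n : K) + j ≠ 0 := fun j => by exact_mod_cast (by omega : n + j ≠ 0)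
  rw [sum_choose_mul_neg_one_pow_div_add s hx]
  have hprod : ∏ j ∈ range (s + 1), ((n : K) + j) = n * (n + s).choose s * s.factorial := by
    exact_mod_cast prod_range_add_eq_mul_choose_mul_factorial n s
  rw [hprod, div_mul_cancel_right₀ (Nat.cast_ne_zero.2 s.factorial_ne_zero), one_div]

noncomputable def hnegSeriesTerm (r p l n : ℕ) : ℝ :=
  hneg r n / ((n : ℝ) ^ p * (Nat.choose (n + l) l : ℝ))

theorem hnegSeriesTerm_add_eq_sum (r p l : ℕ) {n : ℕ} (hn : n ≠ 0) :
    hnegSeriesTerm r p l (n + r) = (-1) ^ r / ((r + l).choose l : ℝ) *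
      ∑ a ∈ range (r + l + 1),
        ((r + l).choose a : ℝ) * (-1) ^ a * (1 / (((n : ℝ) + a) * ((n : ℝ) + r) ^ p)) := by
  have hchoose : ((n + r).choose r : ℝ) * (n + r + l).choose l =
      (n + r + l).choose (r + l) * (r + l).choose l := by
    have := Nat.choose_mul (n := n + r + l) (k := r + l) (s := l) (by omega)
    rw [show n + r + l - l = n + r by omega, show r + l - l = r by omega] at this
    exact_mod_cast (mul_comm _ _).trans this.symm
  have hfactor : ∑ a ∈ range (r + l + 1),
      ((r + l).choose a : ℝ) * (-1) ^ a * (1 / (((n : ℝ) + a) * ((n : ℝ) + r) ^ p)) =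
      (∑ a ∈ range (r + l + 1), ((r + l).choose a : ℝ) * (-1) ^ a / ((n : ℝ) + a)) /
        ((n : ℝ) + r) ^ p := by
    rw [sum_div]
    exact sum_congr rfl fun a _ => by rw [mul_one_div, div_div]
  rw [hfactor, sum_choose_mul_neg_one_pow_div_natCast_add (r + l) hn, hnegSeriesTerm, hneg,
    if_pos (by omega), Nat.add_sub_cancel]
  have hn' : (n : ℝ) ≠ 0 := by exact_mod_cast hn
  have h1 : ((n + r).choose r : ℝ) ≠ 0 := Nat.cast_ne_zero.2 (Nat.choose_pos (by omega)).ne'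
  have h2 : ((n + r + l).choose l : ℝ) ≠ 0 := Nat.cast_ne_zero.2 (Nat.choose_pos (by omega)).ne'
  have h3 : ((r + l).choose l : ℝ) ≠ 0 := Nat.cast_ne_zero.2 (Nat.choose_pos (by omega)).ne'
  have h4 : ((n + r + l).choose (r + l) : ℝ) ≠ 0 :=
    Nat.cast_ne_zero.2 (Nat.choose_pos (by omega)).ne'
  rw [← add_assoc]
  push_cast
  field_simp
  rw [hchoose, mul_comm]

theorem hasSum_hnegSeriesTerm_tail {p : ℕ} (hp : 1 ≤ p) (r l : ℕ) :
    HasSum (fun m : ℕ => hnegSeriesTerm r p l (m + r + 1))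
      (zetaVal (p + 1) - Hgen (p + 1) r +
        (-1 : ℝ) ^ r / ((r + l).choose l : ℝ) *
          ∑ a ∈ (range (r + l + 1)).erase r, ((r + l).choose a : ℝ) * (-1) ^ a *
            ((Hgen 1 r - Hgen 1 a) / ((r : ℝ) - a) ^ p +
              ∑ j ∈ Icc 2 p, (Hgen j r - zetaVal j) / ((r : ℝ) - a) ^ (p - j + 1))) := by
  set c : ℝ := (-1) ^ r / ((r + l).choose l : ℝ)
  set g : ℕ → ℕ → ℝ := fun a m => 1 / (((m : ℝ) + 1 + a) * ((m : ℝ) + 1 + r) ^ p)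
  have hdiag : HasSum (g r) (zetaVal (p + 1) - Hgen (p + 1) r) :=
    (hasSum_zeta_tail (by omega) r).congr_fun fun m => by simp only [g, pow_succ']
  have hterm : ∀ m, hnegSeriesTerm r p l (m + r + 1) =
      c * (((r + l).choose r : ℝ) * (-1) ^ r * g r m +
        ∑ a ∈ (range (r + l + 1)).erase r, ((r + l).choose a : ℝ) * (-1) ^ a * g a m) := by
    intro m
    rw [add_right_comm, hnegSeriesTerm_add_eq_sum r p l m.succ_ne_zero,
      ← add_sum_erase _ _ (mem_range.2 (by omega : r < r + l + 1))]
    push_cast [g]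
    rfl
  have hunit : c * (((r + l).choose r : ℝ) * (-1) ^ r) = 1 := by
    have : ((r + l).choose l : ℝ) ≠ 0 := Nat.cast_ne_zero.2 (Nat.choose_pos (by omega)).ne'
    rw [Nat.choose_symm_add, div_mul_eq_mul_div, mul_div_assoc, mul_div_cancel_left₀ _ this,
      ← mul_pow, neg_one_mul, neg_neg, one_pow]
  have := (((hdiag.mul_left _).add (hasSum_sum fun a ha =>
    (hasSum_one_div_mul_add_pow hp (ne_of_mem_erase ha)).mul_left _)).mul_left c).congr_fun hterm
  rwa [mul_add, ← mul_assoc, hunit, one_mul] at this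

theorem sum_range_eq_add_sum_Icc {M : Type*} [AddCommMonoid M] (f : ℕ → M) {r : ℕ}
    (hr : 1 ≤ r) : ∑ k ∈ range r, f k = f 0 + ∑ k ∈ Icc 1 (r - 1), f k := by
  obtain ⟨s, rfl⟩ := Nat.exists_eq_add_of_le' hr
  rw [sum_range_succ', sum_Icc_one_eq_sum_range, Nat.add_sub_cancel, add_comm]

theorem sum_range_hnegSeriesTerm_eq_sum_sum (r p l : ℕ) :
    ∑ i ∈ range r, hnegSeriesTerm r p l (i + 1) =
      ∑ k ∈ range r, ∑ n ∈ Icc 1 (r - k), (r.choose k : ℝ) * (-1) ^ k /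
        ((n : ℝ) * ((n + k : ℕ) : ℝ) ^ p * ((n + k + l).choose l : ℝ)) := by
  set f : ℕ → ℕ → ℝ := fun k n => (r.choose k : ℝ) * (-1) ^ k /
    ((n : ℝ) * ((n + k : ℕ) : ℝ) ^ p * ((n + k + l).choose l : ℝ))
  have hterm : ∀ i ∈ range r,
      hnegSeriesTerm r p l (i + 1) = ∑ k ∈ range (i + 1), f k (i - k + 1) := by
    intro i hi
    rw [hnegSeriesTerm, hneg, if_neg (by simp only [mem_range] at hi; omega), sum_div]
    refine sum_congr rfl fun k hk => ?_
    have hki : k < i + 1 := mem_range.1 hk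
    simp only [f]
    rw [show i - k + 1 + k = i + 1 by omega, show i + 1 - k = i - k + 1 by omega, div_div,
      mul_assoc]
  rw [sum_congr rfl hterm, sum_range_diag_flip r (fun k j => f k (j + 1))]
  exact sum_congr rfl fun k _ => (sum_Icc_one_eq_sum_range (f k) _).symm

theorem sum_range_hnegSeriesTerm (p l : ℕ) {r : ℕ} (hr : 1 ≤ r) :
    ∑ i ∈ range r, hnegSeriesTerm r p l (i + 1) =
      ∑ n ∈ Icc 1 r, 1 / ((n : ℝ) ^ (p + 1) * ((n + l).choose l : ℝ)) +
        ∑ k ∈ Icc 1 (r - 1), ∑ n ∈ Icc 1 (r - k), (r.choose k : ℝ) * (-1) ^ k /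
          ((n : ℝ) * ((n + k : ℕ) : ℝ) ^ p * ((n + k + l).choose l : ℝ)) := by
  rw [sum_range_hnegSeriesTerm_eq_sum_sum, sum_range_eq_add_sum_Icc _ hr]
  congr 1
  refine sum_congr rfl fun n _ => ?_
  simp [pow_succ']

theorem stmt7 (p r l : ℕ) (hp : 1 ≤ p) (hr : 1 ≤ r) :
    ∑' n : ℕ, hneg r (n + 1) / (((n + 1 : ℕ) : ℝ) ^ p * (Nat.choose (n + 1 + l) l : ℝ)) =
      zetaVal (p + 1) - Hgen (p + 1) r +
      (∑ n ∈ Finset.Icc 1 r, 1 / ((n : ℝ) ^ (p + 1) * (Nat.choose (n + l) l : ℝ))) +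
      (∑ k ∈ Finset.Icc 1 (r - 1), ∑ n ∈ Finset.Icc 1 (r - k),
        (Nat.choose r k : ℝ) * (-1 : ℝ) ^ k /
          ((n : ℝ) * ((n + k : ℕ) : ℝ) ^ p * (Nat.choose (n + k + l) l : ℝ))) +
      (-1 : ℝ) ^ r / (Nat.choose (r + l) l : ℝ) *
        ∑ a ∈ (Finset.range (r + l + 1)).erase r,
          (Nat.choose (r + l) a : ℝ) * (-1 : ℝ) ^ a *
            ((Hgen 1 r - Hgen 1 a) / ((r : ℝ) - (a : ℝ)) ^ p +
             ∑ j ∈ Finset.Icc 2 p,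
               (Hgen j r - zetaVal j) / ((r : ℝ) - (a : ℝ)) ^ (p - j + 1)) := by
  have hsum := (hasSum_hnegSeriesTerm_tail hp r l).sum_range_add
    (f := fun n => hnegSeriesTerm r p l (n + 1))
  change ∑' n : ℕ, hnegSeriesTerm r p l (n + 1) = _
  rw [hsum.tsum_eq, sum_range_hnegSeriesTerm p l hr]
  ring
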